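/- For the unique semiring morphism (O,Δ) from the free idempotent semiring P_ω((X+A)*) to the idempotent semiring B × P_ω((X+A)*)^A extending the assignment x ↦ (o(x), λa.x_a) and b ↦ (0, λa.i(b=a?)), we have (O,Δ) = (ô,δ̂), where (ô,δ̂) is the inductively defined grammar-automaton extension on P_ω((X+A)*). -/

import Mathlib

/-- Language concatenation `S·T = { st | s ∈ S, t ∈ T }`. -/
def lcat {Y : Type} (S T : Set (List Y)) : Set (List Y) :=
  Set.image2 (· ++ ·) S T

/-- `i : B → P(Y*)`, sending `1` to `{ε}` and `0` to `∅` (Booleans as `Prop`). -/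
def iB {Y : Type} (p : Prop) : Set (List Y) := {w | w = [] ∧ p}

section PairSemiring

variable {X A : Type}

/-- The carrier `B × P_ω((X+A)*)^A`. -/
abbrev Pair (X A : Type) : Type := Prop × (A → Set (List (X ⊕ A)))

/-- `𝟘 = (0, λa.∅)`. -/
def pZero : Pair X A := (False, fun _ => ∅)

/-- `𝟙 = (1, λa.∅)`. -/
def pOne : Pair X A := (True, fun _ => ∅)

/-- `(o₁,δ₁) ⊕ (o₂,δ₂) = (o₁ ∨ o₂, λa. δ₁(a) ∪ δ₂(a))`. -/
def pAdd (p q : Pair X A) : Pair X A :=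
  (p.1 ∨ q.1, fun a => p.2 a ∪ q.2 a)

/-- `(o₁,δ₁) ⊗ (o₂,δ₂) =
(o₁ ∧ o₂, λa. δ₁(a)·(i(o₂) ∪ ⋃_{b∈A} {b}·δ₂(b)) ∪ i(o₁)·δ₂(a))`. -/
def pMul (p q : Pair X A) : Pair X A :=
  (p.1 ∧ q.1, fun a =>
    lcat (p.2 a) (iB q.1 ∪ ⋃ b : A, lcat {[Sum.inr b]} (q.2 b)) ∪
      lcat (iB p.1) (q.2 a))

end PairSemiring

section WeakGNF

variable {X A : Type} (o : X → Prop) (δ : X → A → Set (List (X ⊕ A)))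

/-- Output `ô({s})` of a single word over `X + A` (weak Greibach normal form):
`ô({ε}) = 1`, `ô({xs}) = o(x) ∧ ô({s})`, `ô({bs}) = 0`. -/
def oW : List (X ⊕ A) → Prop
  | [] => True
  | Sum.inl x :: s => o x ∧ oW s
  | Sum.inr _ :: _ => False

/-- Derivative `{s}_a` of a single word over `X + A`:
`{ε}_a = ∅`;
`{xs}_a = x_a·(i(ô({s})) ∪ ⋃_b {b}·{s}_b) ∪ i(o(x))·{s}_a`;
`{bs}_a = i(b = a?)·(i(ô({s})) ∪ ⋃_c {c}·{s}_c)`. -/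
def dW : List (X ⊕ A) → A → Set (List (X ⊕ A))
  | [], _ => ∅
  | Sum.inl x :: s, a =>
      lcat (δ x a) (iB (oW o s) ∪ ⋃ b : A, lcat {[Sum.inr b]} (dW s b)) ∪
        lcat (iB (o x)) (dW s a)
  | Sum.inr b :: s, a =>
      lcat (iB (b = a)) (iB (oW o s) ∪ ⋃ c : A, lcat {[Sum.inr c]} (dW s c))

/-- `ô(S) = ⋁_{s ∈ S} ô({s})`. -/
def oS (S : Set (List (X ⊕ A))) : Prop := ∃ s ∈ S, oW o s

/-- `S_a = ⋃_{s ∈ S} {s}_a`. -/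
def dS (S : Set (List (X ⊕ A))) (a : A) : Set (List (X ⊕ A)) :=
  ⋃ s ∈ S, dW o δ s a

end WeakGNF

/-! A finite language is a finite union of words, so `F` is determined by its values on words.
For a word `u :: s` we have `{u :: s} = {[u]}·{s}`, and the product in `B × P_ω((X+A)*)^A` with a
generator on the left unfolds to exactly the defining clauses of `(ô, δ̂)`; induction on the word
finishes. -/

section Extension

variable {X A : Type} (o : X → Prop) (δ : X → A → Set (List (X ⊕ A)))

lemma iB_false {Y : Type} : iB (Y := Y) False = ∅ := by
  ext w
  simp [iB]

lemma singleton_cons_eq_lcat {Y : Type} (u : Y) (t : List Y) :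
    ({u :: t} : Set (List Y)) = lcat {[u]} {t} := by
  simp [lcat]

lemma pMul_letter_word (b : A) (s : List (X ⊕ A)) :
    pMul (False, fun a => iB (b = a)) (oW o s, dW o δ s) =
      (oW o (Sum.inr b :: s), dW o δ (Sum.inr b :: s)) := by
  ext a w
  · simp [pMul, oW]
  · simp [pMul, dW, iB_false, lcat]

lemma pZero_eq_oS_dS_empty : pZero = (oS o (∅ : Set (List (X ⊕ A))), dS o δ ∅) := by
  ext a w
  · simp [pZero, oS]
  · simp [pZero, dS]

lemma pAdd_word_eq_insert (s : List (X ⊕ A)) (T : Set (List (X ⊕ A))) :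
    pAdd (oW o s, dW o δ s) (oS o T, dS o δ T) = (oS o (insert s T), dS o δ (insert s T)) := by
  ext a w
  · simp [pAdd, oS]
  · simp [pAdd, dS]

end Extension

theorem morphism_eq_extension_general {X A : Type}
    (o : X → Prop) (δ : X → A → Set (List (X ⊕ A)))
    (F : Set (List (X ⊕ A)) → Pair X A)
    (hzero : F ∅ = pZero)
    (hone : F {[]} = pOne)
    (hadd : ∀ S T : Set (List (X ⊕ A)), S.Finite → T.Finite →
      F (S ∪ T) = pAdd (F S) (F T))
    (hmul : ∀ S T : Set (List (X ⊕ A)), S.Finite → T.Finite →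
      F (lcat S T) = pMul (F S) (F T))
    (hvar : ∀ x : X, F {[Sum.inl x]} = (o x, fun a => δ x a))
    (hltr : ∀ b : A, F {[Sum.inr b]} = (False, fun a => iB (b = a))) :
    ∀ S : Set (List (X ⊕ A)), S.Finite →
      F S = (oS o S, fun a => dS o δ S a) := by
  have hword : ∀ s, F {s} = (oW o s, dW o δ s) := by
    intro s
    induction s with
    | nil => exact hone
    | cons u t ih =>
      rw [singleton_cons_eq_lcat, hmul _ _ (Set.finite_singleton _) (Set.finite_singleton _), ih]
      cases u with
      | inl x => rw [hvar]; rfl -- the `Sum.inl x :: t` clause of `dW` is literally `pMul`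
      | inr b => rw [hltr, pMul_letter_word]
  intro S hS
  induction S, hS using Set.Finite.induction_on with
  | empty => rw [hzero, pZero_eq_oS_dS_empty]
  | @insert s T _ hT ih =>
    rw [Set.insert_eq, hadd _ _ (Set.finite_singleton _) hT, hword, ih, pAdd_word_eq_insert,
      Set.insert_eq]

/-- The unique semiring morphism `(O,Δ)` from the free idempotent semiring
`P_ω((X+A)*)` to `B × P_ω((X+A)*)^A` extending `x ↦ (o(x), λa.x_a)` and
`b ↦ (0, λa.i(b=a?))` coincides with the inductively defined grammar-automaton
extension `(ô,δ̂)`: any morphism with these properties agrees with `(ô,δ̂)` on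
all finite languages. -/
theorem morphism_eq_extension {X A : Type} [Finite X] [Fintype A]
    (o : X → Prop) (δ : X → A → Set (List (X ⊕ A)))
    (hfin : ∀ x a, (δ x a).Finite)
    (F : Set (List (X ⊕ A)) → Pair X A)
    (hzero : F ∅ = pZero)
    (hone : F {[]} = pOne)
    (hadd : ∀ S T : Set (List (X ⊕ A)), S.Finite → T.Finite →
      F (S ∪ T) = pAdd (F S) (F T))
    (hmul : ∀ S T : Set (List (X ⊕ A)), S.Finite → T.Finite →
      F (lcat S T) = pMul (F S) (F T))
    (hvar : ∀ x : X, F {[Sum.inl x]} = (o x, fun a => δ x a))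
    (hltr : ∀ b : A, F {[Sum.inr b]} = (False, fun a => iB (b = a))) :
    ∀ S : Set (List (X ⊕ A)), S.Finite →
      F S = (oS o S, fun a => dS o δ S a) :=
  morphism_eq_extension_general o δ F hzero hone hadd hmul hvar hltr
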